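/- arXiv:2304.01459 — 2 statements merged into one kernel-verified Lean document; each statement's English description precedes it below -/
import Mathlib

section
/- Let G1, G2 be groups and φ : G1 → G2 a bijection such that a multiset over G1 is a product-one sequence over G1 if and only if its termwise image under φ is a product-one sequence over G2. Then for all g1, g2 in G1: g1 g2 ≠ g2 g1 if and only if φ(g1) φ(g2) ≠ φ(g2) φ(g1); equivalently, g1 g2 = g2 g1 if and only if φ(g1) φ(g2) = φ(g2) φ(g1). -/
/-- A multiset `S` over a group `G` is a *product-one sequence* if its terms can be
ordered so that their product is `1`. -/
def IsProductOne {G : Type*} [Group G] (S : Multiset G) : Prop :=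
  ∃ l : List G, (l : Multiset G) = S ∧ l.prod = 1

/-- The monoid `B(G)` of product-one sequences over `G`, as a submonoid of the free
abelian monoid (finite multisets under addition) over `G`. -/
def ProductOneSubmonoid (G : Type*) [Group G] : AddSubmonoid (Multiset G) where
  carrier := {S | IsProductOne S}
  zero_mem' := ⟨[], rfl, rfl⟩
  add_mem' := by
    rintro a b ⟨l1, rfl, p1⟩ ⟨l2, rfl, p2⟩
    exact ⟨l1 ++ l2, by simp, by simp [p1, p2]⟩

/-!
The sequence `a b c` is product-one exactly when `c = (a b)⁻¹` or `c = (b a)⁻¹`, so `a` and `b`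
commute iff at most one `c` completes `a b` to a product-one sequence. A bijection preserving
product-one sequences maps the completions of `a b` onto those of `φ a φ b`, hence preserves
this property.
-/

section
variable {G : Type*} [Group G]

theorem mul_mul_rotate_eq_one {a b c : G} (h : a * (b * c) = 1) : b * (c * a) = 1 := by
  rw [← mul_assoc]
  exact mul_eq_one_comm.mp h

theorem isProductOne_triple_iff (a b c : G) :
    IsProductOne ({a, b, c} : Multiset G) ↔ c = (a * b)⁻¹ ∨ c = (b * a)⁻¹ := by
  simp only [eq_inv_iff_mul_eq_one]
  constructor
  · rintro ⟨l, hl, hprod⟩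
    have hperm : l ∈ [a, b, c].permutations' :=
      List.mem_permutations'.mpr (Multiset.coe_eq_coe.mp hl)
    simp only [List.permutations', List.flatMap_cons, List.permutations'Aux, List.flatMap_nil,
      List.append_nil, List.map_cons, List.map_nil, List.cons_append, List.nil_append,
      List.mem_cons, List.not_mem_nil, or_false] at hperm
    -- each ordering is a rotation of `[a, b, c]` or `[b, a, c]`
    rcases hperm with rfl | rfl | rfl | rfl | rfl | rfl <;>
      simp only [List.prod_cons, List.prod_nil, mul_one] at hprod
    · exact .inl (mul_mul_rotate_eq_one (mul_mul_rotate_eq_one hprod))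
    · exact .inr (mul_mul_rotate_eq_one (mul_mul_rotate_eq_one hprod))
    · exact .inl (mul_mul_rotate_eq_one hprod)
    · exact .inr (mul_mul_rotate_eq_one hprod)
    · exact .inl hprod
    · exact .inr hprod
  · rintro (habc | hbac)
    · refine ⟨[a, b, c], rfl, ?_⟩
      simpa using mul_mul_rotate_eq_one habc
    · refine ⟨[b, a, c], Multiset.cons_swap b a {c}, ?_⟩
      simpa using mul_mul_rotate_eq_one hbac

theorem commute_iff_subsingleton_setOf_isProductOne (a b : G) :
    Commute a b ↔ {c : G | IsProductOne ({a, b, c} : Multiset G)}.Subsingleton := by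
  simp only [isProductOne_triple_iff]
  constructor
  · rintro hab c (rfl | rfl) d (rfl | rfl) <;> simp [hab.eq]
  · intro hsub
    exact inv_injective (hsub (.inl rfl) (.inr rfl))

end

theorem image_setOf_isProductOne_triple {G H : Type*} [Group G] [Group H] {φ : G → H}
    (hφ : Function.Surjective φ)
    (h : ∀ S : Multiset G, IsProductOne S ↔ IsProductOne (S.map φ)) (a b : G) :
    φ '' {c | IsProductOne ({a, b, c} : Multiset G)} =
      {c | IsProductOne ({φ a, φ b, c} : Multiset H)} := by
  ext y
  obtain ⟨x, rfl⟩ := hφ y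
  simp only [Set.mem_image, Set.mem_ofPred_eq]
  constructor
  · rintro ⟨x', hx', hφx'⟩
    simpa [← hφx'] using (h _).mp hx'
  · intro hx
    exact ⟨x, by simpa [h] using hx, rfl⟩

theorem commute_apply_iff_of_isProductOne_map_iff {G H : Type*} [Group G] [Group H] {φ : G → H}
    (hφ : Function.Bijective φ)
    (h : ∀ S : Multiset G, IsProductOne S ↔ IsProductOne (S.map φ)) (a b : G) :
    Commute (φ a) (φ b) ↔ Commute a b := by
  rw [commute_iff_subsingleton_setOf_isProductOne, commute_iff_subsingleton_setOf_isProductOne,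
    ← image_setOf_isProductOne_triple hφ.surjective h, hφ.injective.subsingleton_image_iff]

theorem A4 (G1 G2 : Type*) [Group G1] [Group G2]
    (φ : G1 → G2) (hbij : Function.Bijective φ)
    (h : ∀ S : Multiset G1, IsProductOne S ↔ IsProductOne (S.map φ)) :
    ∀ g1 g2 : G1,
      (g1 * g2 ≠ g2 * g1 ↔ φ g1 * φ g2 ≠ φ g2 * φ g1) ∧
      (g1 * g2 = g2 * g1 ↔ φ g1 * φ g2 = φ g2 * φ g1) := by
  intro g1 g2
  have hcomm : g1 * g2 = g2 * g1 ↔ φ g1 * φ g2 = φ g2 * φ g1 :=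
    (commute_apply_iff_of_isProductOne_map_iff hbij h g1 g2).symm
  exact ⟨not_congr hcomm, hcomm⟩
end

section
/- Let G1 be a torsion group, G2 a group, and φ : G1 → G2 a bijection such that a multiset over G1 is a product-one sequence over G1 if and only if its termwise image under φ is a product-one sequence over G2. Then there do not exist three elements g1, g2, g3 in G1 satisfying simultaneously: (i) φ(g1 g2) = φ(g1) φ(g2) and φ(g1 g3) = φ(g3) φ(g1); (ii) g1 g2 ≠ g2 g1 and g1 g3 ≠ g3 g1; (iii) g2 g3 = g3 g2. -/
section ProductOne

variable {G : Type*} [Group G]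

theorem isProductOne_cons_iff (a : G) (S : Multiset G) :
    IsProductOne (a ::ₘ S) ↔ ∃ l : List G, (l : Multiset G) = S ∧ a * l.prod = 1 := by
  constructor
  · rintro ⟨l, hl, hprod⟩
    have ha : a ∈ l := by rw [← Multiset.mem_coe, hl]; exact Multiset.mem_cons_self a S
    obtain ⟨l₁, l₂, rfl⟩ := List.append_of_mem ha
    refine ⟨l₂ ++ l₁, (Multiset.cons_inj_right a).mp ?_, ?_⟩
    · rw [← hl, Multiset.cons_coe, Multiset.coe_eq_coe]
      exact (List.perm_middle.trans (List.perm_append_comm.cons a)).symm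
    · rw [List.prod_append, List.prod_cons] at hprod
      rw [List.prod_append, ← mul_assoc]
      exact mul_eq_one_comm.mp hprod
  · rintro ⟨l, rfl, hprod⟩
    exact ⟨a :: l, rfl, hprod⟩

theorem isProductOne_pair_iff (p q : G) : IsProductOne ({p, q} : Multiset G) ↔ p * q = 1 := by
  simp [Multiset.insert_eq_cons, isProductOne_cons_iff, Multiset.coe_eq_singleton]

theorem isProductOne_insert_insert_inv_iff (x y z : G) :
    IsProductOne ({x, y, z⁻¹} : Multiset G) ↔ z = x * y ∨ z = y * x := by
  rw [show ({x, y, z⁻¹} : Multiset G) = z⁻¹ ::ₘ (([x, y] : List G) : Multiset G) from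
    Multiset.coe_eq_coe.mpr (List.perm_middle (l₁ := [x, y]) (l₂ := [])), isProductOne_cons_iff]
  simp [Multiset.coe_eq_coe, List.perm_pair, inv_mul_eq_one]

theorem isProductOne_map_op_iff (S : Multiset G) :
    IsProductOne (S.map MulOpposite.op) ↔ IsProductOne S := by
  constructor
  · rintro ⟨l, hl, hprod⟩
    refine ⟨(l.map MulOpposite.unop).reverse, ?_, ?_⟩
    · rw [Multiset.coe_reverse, ← Multiset.map_coe, hl, Multiset.map_map]
      simp
    · rw [← MulOpposite.unop_list_prod, hprod, MulOpposite.unop_one]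
  · rintro ⟨l, rfl, hprod⟩
    refine ⟨(l.map MulOpposite.op).reverse, by simp, ?_⟩
    rw [← MulOpposite.op_list_prod, hprod, MulOpposite.op_one]

end ProductOne

open Function MulOpposite

section Respects

variable {G H : Type*} [Group G] [Group H]

def RespectsProductOne (φ : G → H) : Prop :=
  ∀ S : Multiset G, IsProductOne S ↔ IsProductOne (S.map φ)

namespace RespectsProductOne

variable {φ : G → H}

theorem map_inv (hφ : RespectsProductOne φ) (x : G) : φ x⁻¹ = (φ x)⁻¹ := by
  have h := (hφ {x, x⁻¹}).mp ((isProductOne_pair_iff _ _).mpr (mul_inv_cancel x))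
  simp only [Multiset.insert_eq_cons, Multiset.map_cons, Multiset.map_singleton] at h
  exact eq_inv_of_mul_eq_one_right ((isProductOne_pair_iff _ _).mp h)

theorem injective (hφ : RespectsProductOne φ) : Injective φ := fun x y hxy => by
  have h : IsProductOne (({x, y⁻¹} : Multiset G).map φ) := by
    simp only [Multiset.insert_eq_cons, Multiset.map_cons, Multiset.map_singleton, hφ.map_inv, hxy]
    exact (isProductOne_pair_iff _ _).mpr (mul_inv_cancel _)
  exact mul_inv_eq_one.mp ((isProductOne_pair_iff _ _).mp ((hφ _).mpr h))

theorem map_mul_eq_or (hφ : RespectsProductOne φ) (x y : G) :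
    φ (x * y) = φ x * φ y ∨ φ (x * y) = φ y * φ x := by
  have h := (hφ {x, y, (x * y)⁻¹}).mp
    ((isProductOne_insert_insert_inv_iff _ _ _).mpr (Or.inl rfl))
  simp only [Multiset.insert_eq_cons, Multiset.map_cons, Multiset.map_singleton, hφ.map_inv] at h
  exact (isProductOne_insert_insert_inv_iff _ _ _).mp h

theorem eq_mul_or_of_map_eq (hφ : RespectsProductOne φ) {x y z : G} (h : φ z = φ x * φ y) :
    z = x * y ∨ z = y * x := by
  refine (isProductOne_insert_insert_inv_iff _ _ _).mp ((hφ _).mpr ?_)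
  simp only [Multiset.insert_eq_cons, Multiset.map_cons, Multiset.map_singleton, hφ.map_inv]
  exact (isProductOne_insert_insert_inv_iff _ _ _).mpr (Or.inl h)

theorem map_mul_eq_or_map_mul_swap_eq (hφ : RespectsProductOne φ) (hsurj : Surjective φ)
    (x y : G) : φ (x * y) = φ x * φ y ∨ φ (y * x) = φ x * φ y := by
  obtain ⟨z, hz⟩ := hsurj (φ x * φ y)
  rcases hφ.eq_mul_or_of_map_eq hz with rfl | rfl
  exacts [Or.inl hz, Or.inr hz]

protected theorem op (hφ : RespectsProductOne φ) :
    RespectsProductOne (op ∘ φ ∘ unop : Gᵐᵒᵖ → Hᵐᵒᵖ) := fun S => by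
  have hS : (S.map unop).map op = S := by simp [Multiset.map_map]
  rw [← hS, isProductOne_map_op_iff, ← Multiset.map_map, ← Multiset.map_map, hS,
    isProductOne_map_op_iff]
  exact hφ _

end RespectsProductOne

structure IsMixedTriple (φ : G → H) (g₁ g₂ g₃ : G) : Prop where
  map_mul_left : φ (g₁ * g₂) = φ g₁ * φ g₂
  map_mul_right : φ (g₁ * g₃) = φ g₃ * φ g₁
  not_commute_left : ¬Commute g₁ g₂
  not_commute_right : ¬Commute g₁ g₃
  commute : Commute g₂ g₃

namespace IsMixedTriple

variable {φ : G → H} {g₁ g₂ g₃ : G}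

theorem map_mul_swap_left (hφ : RespectsProductOne φ) (hT : IsMixedTriple φ g₁ g₂ g₃) :
    φ (g₂ * g₁) = φ g₂ * φ g₁ :=
  (hφ.map_mul_eq_or g₂ g₁).resolve_right fun h =>
    hT.not_commute_left (hφ.injective (hT.map_mul_left.trans h.symm))

theorem map_mul_swap_right (hφ : RespectsProductOne φ) (hT : IsMixedTriple φ g₁ g₂ g₃) :
    φ (g₃ * g₁) = φ g₁ * φ g₃ :=
  (hφ.map_mul_eq_or g₃ g₁).resolve_left fun h =>
    hT.not_commute_right (hφ.injective (hT.map_mul_right.trans h.symm))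

theorem not_commute_map_left (hφ : RespectsProductOne φ) (hT : IsMixedTriple φ g₁ g₂ g₃) :
    ¬Commute (φ g₁) (φ g₂) := fun h =>
  hT.not_commute_left <| hφ.injective <|
    hT.map_mul_left.trans (h.eq.trans (hT.map_mul_swap_left hφ).symm)

theorem not_commute_map_right (hφ : RespectsProductOne φ) (hT : IsMixedTriple φ g₁ g₂ g₃) :
    ¬Commute (φ g₁) (φ g₃) := fun h =>
  hT.not_commute_right <| hφ.injective <|
    hT.map_mul_right.trans (h.eq.symm.trans (hT.map_mul_swap_right hφ).symm)

protected theorem op (hφ : RespectsProductOne φ) (hT : IsMixedTriple φ g₁ g₂ g₃) :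
    IsMixedTriple (op ∘ φ ∘ unop) (op g₁) (op g₂) (op g₃) where
  map_mul_left := congrArg op (hT.map_mul_swap_left hφ)
  map_mul_right := congrArg op (hT.map_mul_swap_right hφ)
  not_commute_left h := hT.not_commute_left h.unop
  not_commute_right h := hT.not_commute_right h.unop
  commute := hT.commute.op

theorem map_mul_mul (hφ : RespectsProductOne φ) (hsurj : Surjective φ)
    (hT : IsMixedTriple φ g₁ g₂ g₃) (hd : φ (g₂ * g₃) = φ g₂ * φ g₃) :
    φ (g₁ * (g₂ * g₃)) = φ g₁ * (φ g₂ * φ g₃) := by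
  rcases hφ.map_mul_eq_or_map_mul_swap_eq hsurj g₁ (g₂ * g₃) with h | h
  · rwa [hd] at h
  rcases hφ.map_mul_eq_or_map_mul_swap_eq hsurj (g₁ * g₂) g₃ with h' | h'
  · rwa [hT.map_mul_left, mul_assoc, mul_assoc] at h'
  refine absurd ?_ hT.not_commute_left
  have h₂₃₁ : g₂ * g₃ * g₁ = g₃ * (g₁ * g₂) :=
    hφ.injective (by rw [h, hd, h', hT.map_mul_left, mul_assoc])
  rw [hT.commute.eq, mul_assoc] at h₂₃₁
  exact (mul_left_cancel h₂₃₁).symm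

theorem commute_map_mul (hφ : RespectsProductOne φ) (hsurj : Surjective φ)
    (hT : IsMixedTriple φ g₁ g₂ g₃) (hd : φ (g₂ * g₃) = φ g₂ * φ g₃) :
    Commute (φ g₁) (φ g₂ * φ g₃) := by
  rw [Commute, SemiconjBy, ← hT.map_mul_mul hφ hsurj hd]
  rcases hφ.map_mul_eq_or_map_mul_swap_eq hsurj g₂ (g₁ * g₃) with h | h
  · rcases hφ.map_mul_eq_or_map_mul_swap_eq hsurj (g₂ * g₃) g₁ with h' | h'
    · have h₂₃₁ : g₂ * g₃ * g₁ = g₂ * (g₁ * g₃) :=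
        hφ.injective (by rw [h, h', hd, hT.map_mul_right, mul_assoc])
      rw [mul_assoc] at h₂₃₁
      exact absurd (mul_left_cancel h₂₃₁).symm hT.not_commute_right
    · rw [h', hd]
  · rw [hT.commute.eq, ← mul_assoc, h, hT.map_mul_right, mul_assoc]

theorem map_mul_mul_swap (hφ : RespectsProductOne φ) (hsurj : Surjective φ)
    (hT : IsMixedTriple φ g₁ g₂ g₃) (hd : φ (g₂ * g₃) = φ g₂ * φ g₃) :
    φ (g₂ * (g₁ * g₃)) = φ g₃ * φ g₁ * φ g₂ := by
  rcases hφ.map_mul_eq_or g₂ (g₁ * g₃) with h | h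
  · have h₂₁₃ : g₂ * (g₁ * g₃) = g₁ * (g₂ * g₃) := hφ.injective <| by
      rw [h, hT.map_mul_right, hT.map_mul_mul hφ hsurj hd,
        (hT.commute_map_mul hφ hsurj hd).eq, mul_assoc]
    simp only [← mul_assoc, mul_left_inj] at h₂₁₃
    exact absurd h₂₁₃.symm hT.not_commute_left
  · rw [h, hT.map_mul_right]

theorem commute_mul_map (hφ : RespectsProductOne φ) (hsurj : Surjective φ)
    (hT : IsMixedTriple φ g₁ g₂ g₃) (hd : φ (g₂ * g₃) = φ g₂ * φ g₃) :
    Commute (φ g₁ * φ g₂) (φ g₃) := by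
  have hm : g₁ * g₂ * (g₃ * g₁) = g₁ * (g₂ * g₃) * g₁ := by simp only [mul_assoc]
  have h₁ := hφ.map_mul_eq_or (g₁ * (g₂ * g₃)) g₁
  have h₂ := hφ.map_mul_eq_or (g₁ * g₂) (g₃ * g₁)
  rw [hT.map_mul_mul hφ hsurj hd] at h₁
  rw [hm, hT.map_mul_left, hT.map_mul_swap_right hφ] at h₂
  have hB := (hT.commute_map_mul hφ hsurj hd).eq
  rw [Commute, SemiconjBy]
  rcases h₁ with h₁ | h₁ <;> rcases h₂ with h₂ | h₂ <;> have e := h₁.symm.trans h₂ <;>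
    simp only [mul_assoc, mul_right_inj] at e
  · exact absurd e.symm (hT.not_commute_map_right hφ)
  · rw [mul_assoc, hB, mul_assoc, e]
  · simp only [← mul_assoc, mul_left_inj] at e
    exact absurd e (hT.not_commute_map_left hφ)
  · rw [mul_assoc, e]

theorem false_of_map_mul (hφ : RespectsProductOne φ) (hsurj : Surjective φ)
    (hT : IsMixedTriple φ g₁ g₂ g₃) (hd : φ (g₂ * g₃) = φ g₂ * φ g₃) : False := by
  have hE := (hT.commute_mul_map hφ hsurj hd).eq
  rcases hφ.map_mul_eq_or (g₂ * g₁) g₃ with h | h <;>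
    rw [mul_assoc, hT.map_mul_mul_swap hφ hsurj hd, hT.map_mul_swap_left hφ] at h
  · rw [← mul_assoc] at hE
    exact hT.not_commute_map_left hφ (mul_right_cancel (hE.trans h))
  · rw [mul_assoc] at h
    exact hT.not_commute_map_left hφ (mul_left_cancel h)

end IsMixedTriple

theorem RespectsProductOne.not_isMixedTriple {φ : G → H} (hφ : RespectsProductOne φ)
    (hsurj : Surjective φ) (g₁ g₂ g₃ : G) : ¬IsMixedTriple φ g₁ g₂ g₃ := fun hT => by
  rcases hφ.map_mul_eq_or g₂ g₃ with hd | hd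
  · exact hT.false_of_map_mul hφ hsurj hd
  · refine (hT.op hφ).false_of_map_mul hφ.op
      (opEquiv.surjective.comp (hsurj.comp unop_surjective)) ?_
    simp [← hT.commute.eq, hd]

end Respects

theorem A5_general (G1 G2 : Type*) [Group G1] [Group G2]
    (φ : G1 → G2) (hbij : Function.Bijective φ)
    (h : ∀ S : Multiset G1, IsProductOne S ↔ IsProductOne (S.map φ)) :
    ¬∃ g1 g2 g3 : G1,
        (φ (g1 * g2) = φ g1 * φ g2 ∧ φ (g1 * g3) = φ g3 * φ g1) ∧
        (g1 * g2 ≠ g2 * g1 ∧ g1 * g3 ≠ g3 * g1) ∧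
        g2 * g3 = g3 * g2 := by
  rintro ⟨g1, g2, g3, ⟨h12, h13⟩, ⟨n12, n13⟩, c23⟩
  exact RespectsProductOne.not_isMixedTriple h hbij.2 g1 g2 g3 ⟨h12, h13, n12, n13, c23⟩

theorem A5 (G1 G2 : Type*) [Group G1] [Group G2]
    (htor : ∀ g : G1, IsOfFinOrder g) (φ : G1 → G2) (hbij : Function.Bijective φ)
    (h : ∀ S : Multiset G1, IsProductOne S ↔ IsProductOne (S.map φ)) :
    ¬∃ g1 g2 g3 : G1,
        (φ (g1 * g2) = φ g1 * φ g2 ∧ φ (g1 * g3) = φ g3 * φ g1) ∧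
        (g1 * g2 ≠ g2 * g1 ∧ g1 * g3 ≠ g3 * g1) ∧
        g2 * g3 = g3 * g2 :=
  A5_general G1 G2 φ hbij h
end
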